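/- arXiv:1203.6119 — 6 statements merged into one kernel-verified Lean document; each statement's English description precedes it below -/
import Mathlib

section
/- If a graph G with at least r+1 vertices is r-robust, then G is r-connected, i.e., removing any set of fewer than r vertices leaves the graph connected. -/
open SimpleGraph

variable {V : Type*}

/-- A set `S` is `r`-reachable if some vertex in `S` has at least `r` neighbors outside `S`. -/
def rReachable (G : SimpleGraph V) (r : ℕ) (S : Set V) : Prop :=
  ∃ i ∈ S, r ≤ ((G.neighborSet i) \ S).ncard

/-- A graph is `r`-robust if for every pair of nonempty disjoint vertex subsets,
at least one is `r`-reachable. -/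
def rRobust (G : SimpleGraph V) (r : ℕ) : Prop :=
  ∀ A B : Set V, A.Nonempty → B.Nonempty → Disjoint A B →
    rReachable G r A ∨ rReachable G r B

/-- A graph is `r`-connected if it has more than `r` vertices and removing any set of
fewer than `r` vertices leaves the graph connected. -/
def rConnected [Fintype V] (G : SimpleGraph V) (r : ℕ) : Prop :=
  r < Fintype.card V ∧ ∀ T : Set V, T.ncard < r → (G.induce Tᶜ).Connected

theorem stmt1 [Fintype V] (G : SimpleGraph V) (r : ℕ)
    (hcard : r + 1 ≤ Fintype.card V) (hrob : rRobust G r) :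
    rConnected G r := by
  refine ⟨by omega, ?_⟩
  intro T hT
  have hTfin : T.Finite := Set.toFinite T
  have hcompl : Tᶜ.Nonempty := by
    by_contra h
    rw [Set.not_nonempty_iff_eq_empty, Set.compl_empty_iff] at h
    subst h
    rw [Set.ncard_univ, Nat.card_eq_fintype_card] at hT
    omega
  obtain ⟨a, ha⟩ := hcompl
  rw [SimpleGraph.connected_iff]
  refine ⟨?_, ⟨⟨a, ha⟩⟩⟩
  intro x y
  suffices h : ∀ z : ↥Tᶜ, (G.induce Tᶜ).Reachable ⟨a, ha⟩ z by
    exact (h x).symm.trans (h y)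
  by_contra hcon
  push_neg at hcon
  obtain ⟨⟨b, hb⟩, hbr⟩ := hcon
  set A : Set V := {v | ∃ h : v ∈ Tᶜ, (G.induce Tᶜ).Reachable ⟨a, ha⟩ ⟨v, h⟩} with hAdef
  set B : Set V := Tᶜ \ A with hBdef
  have hAne : A.Nonempty := ⟨a, ha, Reachable.refl _⟩
  have hBne : B.Nonempty := ⟨b, hb, fun hmem => hbr hmem.2⟩
  have hdisj : Disjoint A B := Set.disjoint_sdiff_right
  rcases hrob A B hAne hBne hdisj with ⟨i, hiA, hir⟩ | ⟨i, hiB, hir⟩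
  · obtain ⟨hiT, hreach⟩ := hiA
    have hsub : G.neighborSet i \ A ⊆ T := by
      intro w ⟨hadj, hwA⟩
      by_contra hwT
      exact hwA ⟨hwT, hreach.trans (Adj.reachable (by exact hadj : G.Adj i w))⟩
    have := Set.ncard_le_ncard hsub hTfin
    omega
  · obtain ⟨hiT, hiA⟩ := hiB
    have hsub : G.neighborSet i \ B ⊆ T := by
      intro w ⟨hadj, hwB⟩
      by_contra hwT
      have hwA : w ∈ A := by
        by_contra hwA'
        exact hwB ⟨hwT, hwA'⟩
      obtain ⟨hwT', hreach⟩ := hwA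
      exact hiA ⟨hiT, hreach.trans (Adj.reachable (by exact hadj.symm : G.Adj w i))⟩
    have := Set.ncard_le_ncard hsub hTfin
    omega
end

section
/- If G is an r-robust graph and G' is obtained from G by adding one new vertex v together with edges from v to at least r vertices of G, then G' is r-robust. -/
open SimpleGraph

variable {V : Type*}

/-- The graph obtained from `G` by adding a new vertex (`none`) joined to each vertex in `N`. -/
def addVertex (G : SimpleGraph V) (N : Set V) : SimpleGraph (Option V) :=
  SimpleGraph.fromRel fun a b =>
    match a, b with
    | some u, some v => G.Adj u v
    | some u, none => u ∈ N
    | none, some _ => False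
    | none, none => False

/-! The new vertex `none` sees `r` vertices of `G`, so any set of the extended graph that contains
no old vertex, i.e. `{none}`, is `r`-reachable. Any other pair of disjoint nonempty sets restricts
to a pair of disjoint nonempty sets of `G`, and an old vertex witnessing `r`-reachability in `G`
keeps all of its old neighbours in the extended graph. -/

namespace addVertex

variable (G : SimpleGraph V) (N : Set V)

@[simp]
lemma adj_some_some {u w : V} : (addVertex G N).Adj (some u) (some w) ↔ G.Adj u w := by
  simp only [addVertex, fromRel_adj, ne_eq, Option.some.injEq]
  exact ⟨fun ⟨_, h⟩ => h.elim id G.adj_symm, fun h => ⟨G.ne_of_adj h, .inl h⟩⟩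

@[simp]
lemma adj_none_some {u : V} : (addVertex G N).Adj none (some u) ↔ u ∈ N := by
  simp [addVertex]

lemma neighborSet_none : (addVertex G N).neighborSet none = some '' N := by
  ext (_ | u) <;> simp

variable {G N}

lemma rReachable_of_preimage_some {r : ℕ} {S : Set (Option V)}
    (h : rReachable G r (some ⁻¹' S)) : rReachable (addVertex G N) r S := by
  obtain ⟨i, hi, hr⟩ := h
  refine ⟨some i, hi, hr.trans ?_⟩
  set T := (addVertex G N).neighborSet (some i) \ S
  -- Comparing with `T \ {none}`, which lies in the range of `some`, needs no finiteness of `T`.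
  have hT : G.neighborSet i \ some ⁻¹' S = some ⁻¹' (T \ {none}) := by
    ext u; simp [T]
  calc (G.neighborSet i \ some ⁻¹' S).ncard
      = (T \ {none}).ncard := by
        rw [hT]
        refine Set.ncard_preimage_of_injective_subset_range (Option.some_injective V) ?_
        rintro (_ | u) ⟨_, hu⟩
        · exact (hu rfl).elim
        · exact ⟨u, rfl⟩
    _ ≤ T.ncard := Set.ncard_sdiff_singleton_le T none

lemma rReachable_of_preimage_some_eq_empty {r : ℕ} (hN : r ≤ N.ncard) {S : Set (Option V)}
    (hS : S.Nonempty) (hS' : some ⁻¹' S = ∅) : rReachable (addVertex G N) r S := by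
  have hnone : none ∈ S := by
    obtain ⟨_ | u, hu⟩ := hS
    · exact hu
    · exact (hS'.subset hu).elim
  refine ⟨none, hnone, ?_⟩
  have hdiff : (addVertex G N).neighborSet none \ S = some '' N := by
    rw [neighborSet_none, sdiff_eq_left, Set.disjoint_left]
    rintro _ ⟨u, -, rfl⟩ hu
    exact hS'.subset hu
  rwa [hdiff, Set.ncard_image_of_injective N (Option.some_injective V)]

end addVertex

theorem stmt4_general (G : SimpleGraph V) (r : ℕ) (N : Set V)
    (hN : r ≤ N.ncard) (hrob : rRobust G r) :
    rRobust (addVertex G N) r := by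
  intro A B hA hB hAB
  obtain hA' | hA' := (some ⁻¹' A).eq_empty_or_nonempty
  · exact .inl (addVertex.rReachable_of_preimage_some_eq_empty hN hA hA')
  obtain hB' | hB' := (some ⁻¹' B).eq_empty_or_nonempty
  · exact .inr (addVertex.rReachable_of_preimage_some_eq_empty hN hB hB')
  exact (hrob _ _ hA' hB' (hAB.preimage some)).imp
    addVertex.rReachable_of_preimage_some addVertex.rReachable_of_preimage_some

theorem stmt4 [Fintype V] (G : SimpleGraph V) (r : ℕ) (N : Set V)
    (hN : r ≤ N.ncard) (hrob : rRobust G r) :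
    rRobust (addVertex G N) r :=
  stmt4_general G r N hN hrob
end

section
/- Let G be the graph on 2m vertices (m ≥ 2) formed by two disjoint complete graphs S₁ and S₂ each on m vertices, together with a perfect matching between them. Then G is m-connected: removing any set of fewer than m vertices leaves the graph connected. -/
open SimpleGraph

variable {V : Type*}

/-- Two cliques of size `m` (the `inl` copy and the `inr` copy) joined by a perfect
matching (vertex `i` of the first clique joined to vertex `i` of the second). -/
def matchGraph (m : ℕ) : SimpleGraph (Fin m ⊕ Fin m) :=
  SimpleGraph.fromRel fun a b =>
    match a, b with
    | Sum.inl _, Sum.inl _ => True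
    | Sum.inr _, Sum.inr _ => True
    | Sum.inl i, Sum.inr j => i = j
    | Sum.inr _, Sum.inl _ => False

theorem stmt7 (m : ℕ) (hm : 2 ≤ m) : rConnected (matchGraph m) m := by
  constructor
  · simp only [Fintype.card_sum, Fintype.card_fin]
    omega
  · intro T hT
    obtain ⟨i₀, hi₀l, hi₀r⟩ : ∃ i : Fin m, Sum.inl i ∉ T ∧ Sum.inr i ∉ T := by
      by_contra h
      push_neg at h
      have hsub : (Set.univ : Set (Fin m)) ⊆ (Sum.elim id id : Fin m ⊕ Fin m → Fin m) '' T := by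
        intro i _
        by_cases h1 : Sum.inl i ∈ T
        · exact ⟨Sum.inl i, h1, rfl⟩
        · exact ⟨Sum.inr i, h i h1, rfl⟩
      have h1 : m ≤ T.ncard := by
        calc m = (Set.univ : Set (Fin m)).ncard := by simp [Set.ncard_univ]
        _ ≤ ((Sum.elim id id : Fin m ⊕ Fin m → Fin m) '' T).ncard :=
            Set.ncard_le_ncard hsub (T.toFinite.image _)
        _ ≤ T.ncard := Set.ncard_image_le T.toFinite
      omega
    have hi₀l' : Sum.inl i₀ ∈ Tᶜ := hi₀l
    have hi₀r' : Sum.inr i₀ ∈ Tᶜ := hi₀r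
    have hub : ↑Tᶜ := ⟨Sum.inl i₀, hi₀l'⟩
    have adjlr : ((matchGraph m).induce Tᶜ).Adj ⟨Sum.inr i₀, hi₀r'⟩ ⟨Sum.inl i₀, hi₀l'⟩ := by
      simp [matchGraph]
    have key : ∀ w : ↑Tᶜ, ((matchGraph m).induce Tᶜ).Reachable w ⟨Sum.inl i₀, hi₀l'⟩ := by
      rintro ⟨(⟨j⟩ | ⟨j⟩), hw⟩
      · by_cases hj : j = i₀
        · subst hj
          exact Reachable.refl _
        · have : ((matchGraph m).induce Tᶜ).Adj ⟨Sum.inl j, hw⟩ ⟨Sum.inl i₀, hi₀l'⟩ := by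
            simp [matchGraph, hj]
          exact this.reachable
      · by_cases hj : j = i₀
        · subst hj
          exact adjlr.reachable
        · have : ((matchGraph m).induce Tᶜ).Adj ⟨Sum.inr j, hw⟩ ⟨Sum.inr i₀, hi₀r'⟩ := by
            simp [matchGraph, hj]
          exact this.reachable.trans adjlr.reachable
    rw [SimpleGraph.connected_iff]
    exact ⟨fun u v => (key u).trans (key v).symm, ⟨⟨Sum.inl i₀, hi₀l'⟩⟩⟩
end

section
/- For cascading with threshold r on a graph with n vertices, contagion from any m initially infected nodes occurs (i.e., every initial infected set of size m eventually infects all vertices) if and only if every nonempty subset of vertices of size at most n − m is r-reachable, assuming m ≥ r. -/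
open SimpleGraph

variable {V : Type*}

/-- One step of cascading with threshold `r`: every vertex with at least `r` infected
neighbors becomes infected, and infected vertices stay infected. -/
def infectStep (G : SimpleGraph V) (r : ℕ) (I : Set V) : Set V :=
  I ∪ {v | r ≤ ((G.neighborSet v) ∩ I).ncard}

lemma subset_infectStep (G : SimpleGraph V) (r : ℕ) (I : Set V) :
    I ⊆ infectStep G r I := Set.subset_union_left

lemma iterate_fixed [Fintype V] (G : SimpleGraph V) (r : ℕ) :
    ∀ (k : ℕ) (I : Set V), Fintype.card V ≤ I.ncard + k →
      infectStep G r ((infectStep G r)^[k] I) = (infectStep G r)^[k] I := by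
  intro k
  induction k with
  | zero =>
    intro I h
    simp only [Function.iterate_zero, id_eq]
    have hu : (Set.univ : Set V).ncard = Fintype.card V := by
      rw [Set.ncard_univ, Nat.card_eq_fintype_card]
    have hIu : I = Set.univ :=
      Set.eq_of_subset_of_ncard_le (Set.subset_univ I) (by omega) Set.finite_univ
    subst hIu
    exact Set.eq_univ_of_univ_subset (subset_infectStep G r _)
  | succ k ih =>
    intro I h
    by_cases hfix : infectStep G r I = I
    · have : ∀ j, (infectStep G r)^[j] I = I := by
        intro j
        induction j with
        | zero => rfl
        | succ j ihj => rw [Function.iterate_succ_apply', ihj, hfix]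
      simp only [this, hfix]
    · have hlt : I.ncard < (infectStep G r I).ncard := by
        apply Set.ncard_lt_ncard _ (Set.toFinite _)
        exact ssubset_of_subset_of_ne (subset_infectStep G r I) (Ne.symm hfix)
      have := ih (infectStep G r I) (by omega)
      rw [← Function.iterate_succ_apply] at this
      exact this

theorem stmt8 [Fintype V] (G : SimpleGraph V) (r m : ℕ) (hrm : r ≤ m) :
    (∀ I₀ : Set V, I₀.ncard = m → ∃ t : ℕ, (infectStep G r)^[t] I₀ = Set.univ) ↔
      (∀ S : Set V, S.Nonempty → S.ncard ≤ Fintype.card V - m → rReachable G r S) := by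
  have hcard : ∀ I : Set V, I.ncard ≤ Fintype.card V := by
    intro I
    have := Set.ncard_le_ncard (Set.subset_univ I) Set.finite_univ
    rwa [Set.ncard_univ, Nat.card_eq_fintype_card] at this
  constructor
  · -- contagion → every small nonempty set r-reachable
    intro hcont S hS hle
    by_contra hnr
    simp only [rReachable, not_exists, not_le, not_and] at hnr
    -- choose I₀ ⊆ Sᶜ of size m
    have h1 : 0 < S.ncard := (Set.ncard_pos (Set.toFinite S)).mpr hS
    have hcS : S.ncard + Sᶜ.ncard = Fintype.card V := by
      rw [Set.ncard_add_ncard_compl, Nat.card_eq_fintype_card]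
    have hm : m ≤ Sᶜ.ncard := by
      have := hcard S
      omega
    obtain ⟨I₀, hI₀sub, hI₀card⟩ := Set.exists_subset_card_eq hm
    obtain ⟨t, ht⟩ := hcont I₀ hI₀card
    have hinv : ∀ j, (infectStep G r)^[j] I₀ ⊆ Sᶜ := by
      intro j
      induction j with
      | zero => exact hI₀sub
      | succ j ihj =>
        rw [Function.iterate_succ_apply']
        intro v hv
        rcases hv with hv | hv
        · exact ihj hv
        · simp only [Set.mem_setOf_eq] at hv
          by_contra hvc
          have hvS : v ∈ S := by simpa using hvc
          have hsub : (G.neighborSet v) ∩ (infectStep G r)^[j] I₀ ⊆ (G.neighborSet v) \ S := by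
            intro x hx
            exact ⟨hx.1, by simpa using ihj hx.2⟩
          have := Set.ncard_le_ncard hsub (Set.toFinite _)
          have := hnr v hvS
          omega
    have := hinv t
    rw [ht] at this
    obtain ⟨s, hs⟩ := hS
    exact absurd (this (Set.mem_univ s)) (by simpa using hs)
  · -- every small nonempty set r-reachable → contagion
    intro hreach I₀ hI₀
    refine ⟨Fintype.card V, ?_⟩
    set I := (infectStep G r)^[Fintype.card V] I₀ with hI
    have hfix : infectStep G r I = I := iterate_fixed G r _ I₀ (by omega)
    by_contra hne
    have hIc : Iᶜ.Nonempty := Set.nonempty_compl.mpr hne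
    have hI₀I : I₀ ⊆ I := by
      clear hfix hne hIc
      rw [hI]
      generalize Fintype.card V = k
      induction k with
      | zero => rfl
      | succ k ihk =>
        rw [Function.iterate_succ_apply']
        exact ihk.trans (subset_infectStep G r _)
    have hIm : m ≤ I.ncard := hI₀ ▸ Set.ncard_le_ncard hI₀I (Set.toFinite _)
    have hcI : I.ncard + Iᶜ.ncard = Fintype.card V := by
      rw [Set.ncard_add_ncard_compl, Nat.card_eq_fintype_card]
    obtain ⟨i, hiI, hir⟩ := hreach Iᶜ hIc (by omega)
    have heq : (G.neighborSet i) \ Iᶜ = (G.neighborSet i) ∩ I := by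
      ext x; simp [Set.mem_diff]
    rw [heq] at hir
    have : i ∈ infectStep G r I := Or.inr hir
    rw [hfix] at this
    exact hiI this
end

section
/- Let G be a one-dimensional geometric graph on vertices 1,…,n with positions x(1) ≤ x(2) ≤ ⋯ ≤ x(n) in [0, l], where vertices i and j are adjacent iff |x(i) − x(j)| ≤ ρ. If x(n) − x(1) > ρ and G is r-connected, then every closed subinterval of length ρ contained in the open interval (x(1), x(n)) contains at least r vertices. -/
open SimpleGraph

variable {V : Type*}

/-- One-dimensional geometric graph: distinct vertices `i`, `j` are adjacent iff
`|x i - x j| ≤ ρ`. -/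
def geomGraph {n : ℕ} (x : Fin n → ℝ) (ρ : ℝ) : SimpleGraph (Fin n) :=
  SimpleGraph.fromRel fun i j => |x i - x j| ≤ ρ

theorem stmt10 (n : ℕ) (x : Fin (n + 1) → ℝ) (ρ : ℝ) (hρ : 0 < ρ)
    (hx : Monotone x) (hspread : ρ < x (Fin.last n) - x 0) (r : ℕ)
    (hconn : rConnected (geomGraph x ρ) r) :
    ∀ a : ℝ, x 0 < a → a + ρ < x (Fin.last n) →
      r ≤ {i : Fin (n + 1) | a ≤ x i ∧ x i ≤ a + ρ}.ncard := by
  intro a ha hb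
  by_contra hlt
  push_neg at hlt
  set S : Set (Fin (n + 1)) := {i : Fin (n + 1) | a ≤ x i ∧ x i ≤ a + ρ} with hS
  have hc := hconn.2 S hlt
  have h0 : (0 : Fin (n + 1)) ∈ Sᶜ := by
    simp only [hS, Set.mem_compl_iff, Set.mem_setOf_eq, not_and, not_le]
    intro h; exact absurd h (not_le.2 ha)
  have hlast : (Fin.last n) ∈ Sᶜ := by
    simp only [hS, Set.mem_compl_iff, Set.mem_setOf_eq, not_and, not_le]
    intro _; exact hb
  have hreach := hc.preconnected ⟨0, h0⟩ ⟨Fin.last n, hlast⟩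
  obtain ⟨w⟩ := hreach
  have key : ∀ (u v : ↥Sᶜ), ((geomGraph x ρ).induce Sᶜ).Walk u v →
      x u.1 < a → x v.1 < a := by
    intro u v w
    induction w with
    | nil => exact id
    | @cons u b v h p ih =>
      intro hu
      apply ih
      have hadj : (geomGraph x ρ).Adj u.1 b.1 := h
      rw [geomGraph, fromRel_adj] at hadj
      have habs : |x u.1 - x b.1| ≤ ρ := by
        rcases hadj.2 with h1 | h1
        · exact h1
        · rwa [abs_sub_comm]
      have hbmem := b.2
      simp only [hS, Set.mem_compl_iff, Set.mem_setOf_eq, not_and, not_le] at hbmem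
      by_contra hge
      push_neg at hge
      have h2 := hbmem hge
      have : x b.1 - x u.1 ≤ ρ := by
        have := abs_le.1 habs
        linarith [this.1]
      linarith
  have := key _ _ w (by simpa using ha)
  simp only at this
  linarith
end

section
/- Let G be a one-dimensional geometric graph on n vertices with positions x(1) ≤ ⋯ ≤ x(n) in ℝ, where i and j are adjacent iff |x(i) − x(j)| ≤ ρ. If G is r-connected, then G is ⌊r/2⌋-robust. -/
/-!
Let `a = min A` and `b = min B` with, say, `a < b`. Removing the fewer than `r` vertices of
`N(b) ∩ [< b]` would leave a graph in which some edge crosses `b` from below; since positions are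
monotone, its lower endpoint is within `ρ` of `b`, so it was removed after all. Hence either `b` has
at least `r` neighbours below it, all outside `B`, or `b` is adjacent to every vertex below it.
In the latter case every neighbour of `a` in `A` is a neighbour of `b` outside `B`, so the at least
`r` neighbours of `a` split between `N(a) \ A` and `N(b) \ B`, and one of these has `⌊r/2⌋` elements.
-/

open SimpleGraph

variable {V : Type*}

section Connectivity

variable [Fintype V] {G : SimpleGraph V} {r : ℕ}

lemma rConnected.exists_adj_mem_notMem (hG : rConnected G r) {T P : Set V} (hT : T.ncard < r)
    {u w : V} (hu : u ∉ T) (hw : w ∉ T) (huP : u ∈ P) (hwP : w ∉ P) :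
    ∃ p q, p ∉ T ∧ q ∉ T ∧ p ∈ P ∧ q ∉ P ∧ G.Adj p q := by
  obtain ⟨walk⟩ := (hG.2 T hT).preconnected ⟨u, hu⟩ ⟨w, hw⟩
  obtain ⟨d, -, hp, hq⟩ := walk.exists_boundary_dart {z | (z : V) ∈ P} huP hwP
  exact ⟨d.fst, d.snd, d.fst.2, d.snd.2, hp, hq, d.adj⟩

lemma rConnected.le_ncard_neighborSet (hG : rConnected G r) (v : V) :
    r ≤ (G.neighborSet v).ncard := by
  by_contra! hlt
  have hcard : (insert v (G.neighborSet v)).ncard < (Set.univ : Set V).ncard := by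
    have := Set.ncard_insert_le v (G.neighborSet v)
    have := hG.1
    rw [Set.ncard_univ, Nat.card_eq_fintype_card]
    omega
  obtain ⟨w, -, hw⟩ := Set.exists_mem_notMem_of_ncard_lt_ncard hcard
  -- deleting `N(v)` would separate `v` from `w`
  obtain ⟨p, q, -, hq, rfl, -, hpq⟩ := hG.exists_adj_mem_notMem (P := {v}) hlt
    G.irrefl (fun h => hw (Or.inr h)) rfl (fun h => hw (Or.inl h))
  exact hq hpq

end Connectivity

lemma Monotone.abs_sub_le_of_le_of_le {ι : Type*} [Preorder ι] {x : ι → ℝ} {ρ : ℝ}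
    (hx : Monotone x) {i j k l : ι} (hik : i ≤ k) (hkl : k ≤ l) (hlj : l ≤ j) (h : |x i - x j| ≤ ρ) :
    |x k - x l| ≤ ρ := by
  have := hx hik
  have := hx hkl
  have := hx hlj
  rw [abs_le] at h ⊢
  constructor <;> linarith

section Geometric

variable {n : ℕ} {x : Fin n → ℝ} {ρ : ℝ} {r : ℕ}

lemma geomGraph_adj {i j : Fin n} :
    (geomGraph x ρ).Adj i j ↔ i ≠ j ∧ |x i - x j| ≤ ρ := by
  rw [geomGraph, fromRel_adj, abs_sub_comm (x j), or_self]

lemma geomGraph_adj_of_le_of_lt_of_le (hx : Monotone x) {i j k l : Fin n} (hik : i ≤ k)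
    (hkl : k < l) (hlj : l ≤ j) (h : (geomGraph x ρ).Adj i j) : (geomGraph x ρ).Adj k l :=
  geomGraph_adj.2
    ⟨hkl.ne, hx.abs_sub_le_of_le_of_le hik hkl.le hlj (geomGraph_adj.1 h).2⟩

lemma geomGraph_adj_forall_lt_or_le_ncard (hx : Monotone x)
    (hG : rConnected (geomGraph x ρ) r) (b : Fin n) :
    (∀ j < b, (geomGraph x ρ).Adj b j) ∨
      r ≤ ((geomGraph x ρ).neighborSet b ∩ Set.Iio b).ncard := by
  refine or_iff_not_imp_right.2 fun hlt j hj => ?_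
  by_contra hjb
  obtain ⟨p, q, hpT, -, hp, hq, hpq⟩ := hG.exists_adj_mem_notMem (P := Set.Iio b)
    (lt_of_not_ge hlt) (fun h => hjb h.1) (fun h => lt_irrefl b h.2) hj (lt_irrefl b)
  exact hpT ⟨(geomGraph_adj_of_le_of_lt_of_le hx le_rfl hp (not_lt.1 hq) hpq).symm, hp⟩

lemma rReachable_half_or_of_lt (hx : Monotone x) (hG : rConnected (geomGraph x ρ) r)
    {A B : Set (Fin n)} (hAB : Disjoint A B) {a b : Fin n} (ha : a ∈ A) (hb : b ∈ B)
    (hbmin : ∀ v ∈ B, b ≤ v) (hab : a < b) :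
    rReachable (geomGraph x ρ) (r / 2) A ∨ rReachable (geomGraph x ρ) (r / 2) B := by
  set G := geomGraph x ρ
  rcases geomGraph_adj_forall_lt_or_le_ncard hx hG b with hall | hbig
  · have hsub : G.neighborSet a ∩ A ⊆ G.neighborSet b \ B := by
      rintro v ⟨hav, hvA⟩
      have hvB : v ∉ B := hAB.notMem_of_mem_left hvA
      refine ⟨?_, hvB⟩
      rcases lt_or_gt_of_ne (fun h : v = b => hvB (h ▸ hb)) with hvb | hbv
      · exact hall v hvb
      · exact geomGraph_adj_of_le_of_lt_of_le hx hab.le hbv le_rfl hav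
    have hsplit : r ≤ (G.neighborSet b \ B).ncard + (G.neighborSet a \ A).ncard :=
      calc r ≤ (G.neighborSet a).ncard := hG.le_ncard_neighborSet a
        _ = (G.neighborSet a ∩ A).ncard + (G.neighborSet a \ A).ncard :=
          (Set.ncard_inter_add_ncard_sdiff_eq_ncard _ _).symm
        _ ≤ _ := add_le_add_left (Set.ncard_le_ncard hsub) _
    by_cases hA : r / 2 ≤ (G.neighborSet a \ A).ncard
    · exact Or.inl ⟨a, ha, hA⟩
    · exact Or.inr ⟨b, hb, by omega⟩
  · have hsub : G.neighborSet b ∩ Set.Iio b ⊆ G.neighborSet b \ B :=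
      fun v hv => ⟨hv.1, fun hvB => (hbmin v hvB).not_gt hv.2⟩
    exact Or.inr ⟨b, hb, (Nat.div_le_self r 2).trans (hbig.trans (Set.ncard_le_ncard hsub))⟩

end Geometric

theorem stmt11_general (n : ℕ) (x : Fin n → ℝ) (ρ : ℝ)
    (hx : Monotone x) (r : ℕ) (hconn : rConnected (geomGraph x ρ) r) :
    rRobust (geomGraph x ρ) (r / 2) := by
  intro A B hA hB hAB
  obtain ⟨a, ha, hamin⟩ := Set.exists_min_image A id A.toFinite hA
  obtain ⟨b, hb, hbmin⟩ := Set.exists_min_image B id B.toFinite hB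
  rcases lt_or_gt_of_ne (hAB.ne_of_mem ha hb) with hab | hba
  · exact rReachable_half_or_of_lt hx hconn hAB ha hb hbmin hab
  · exact (rReachable_half_or_of_lt hx hconn hAB.symm hb ha hamin hba).symm

theorem stmt11 (n : ℕ) (x : Fin n → ℝ) (ρ : ℝ) (hρ : 0 < ρ)
    (hx : Monotone x) (r : ℕ) (hconn : rConnected (geomGraph x ρ) r) :
    rRobust (geomGraph x ρ) (r / 2) :=
  stmt11_general n x ρ hx r hconn
end
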